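/- Let f : ℝⁿ → ℝ be a norm, r > 0, g_r = e_r(f²), h_r = √(g_r). Then h_r is a norm on ℝⁿ: it is nonnegative, positively homogeneous, satisfies h_r(x) = 0 only if x = 0, is symmetric, and satisfies the triangle inequality. -/

import Mathlib

/-!
With `N(a, b) = √(a² + (r/2) b²)`, a Euclidean norm on `ℝ²`, the square root of the envelope is
`h(x) = inf_y N(f y, ‖y - x‖)`, since `√` is monotone and continuous. Substituting `y ↦ c • y`
gives `h(c • x) = |c| h(x)`. If `u`, `v` are competitors for `x`, `y`, then `u + v` is one for
`x + y`, and the triangle inequalities of `f`, of `‖·‖` and of `N` give `h(x + y) ≤ h x + h y`.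
Finally `f`, a convex function on a finite-dimensional space, is continuous; so for `x ≠ 0` the
term `f(y)²` is bounded below near `x` and the quadratic penalty is bounded below away from `x`.
-/

open Set

lemma sqrt_sq_add_mul_sq_add_le {s : ℝ} (hs : 0 ≤ s) (a b a' b' : ℝ) :
    √((a + a') ^ 2 + s * (b + b') ^ 2) ≤ √(a ^ 2 + s * b ^ 2) + √(a' ^ 2 + s * b' ^ 2) := by
  have key := norm_add_le !₂[a, √s * b] !₂[a', √s * b']
  simp only [EuclideanSpace.norm_eq, Fin.sum_univ_two] at key
  simpa [mul_pow, Real.sq_sqrt hs, ← mul_add] using key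

section MoreauEnvelope

variable {E : Type*} [SeminormedAddCommGroup E]

noncomputable def moreauEnvelope (φ : E → ℝ) (r : ℝ) (x : E) : ℝ :=
  ⨅ y, φ y + r / 2 * ‖y - x‖ ^ 2

variable {φ : E → ℝ} {r : ℝ}

lemma bddBelow_range_moreau (hφ : 0 ≤ φ) (hr : 0 ≤ r) (x : E) :
    BddBelow (range fun y => φ y + r / 2 * ‖y - x‖ ^ 2) :=
  ⟨0, forall_mem_range.2 fun y => add_nonneg (hφ y) (by positivity)⟩

lemma moreauEnvelope_pos (hφ : 0 ≤ φ) (hr : 0 < r) {x : E} (hφx : 0 < φ x)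
    (hφc : LowerSemicontinuousAt φ x) : 0 < moreauEnvelope φ r x := by
  obtain ⟨δ, hδ, hnear⟩ := Metric.eventually_nhds_iff.1 (hφc (φ x / 2) (half_lt_self hφx))
  refine (lt_min (half_pos hφx) (by positivity : 0 < r / 2 * δ ^ 2)).trans_le (le_ciInf fun y => ?_)
  rcases lt_or_ge (dist y x) δ with hyx | hyx
  · exact (min_le_left _ _).trans <| (hnear hyx).le.trans (le_add_of_nonneg_right (by positivity))
  · rw [dist_eq_norm] at hyx
    have : r / 2 * δ ^ 2 ≤ r / 2 * ‖y - x‖ ^ 2 := by gcongr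
    exact (min_le_right _ _).trans <| this.trans (le_add_of_nonneg_left (hφ y))

lemma sqrt_moreauEnvelope_eq_iInf (hφ : 0 ≤ φ) (hr : 0 ≤ r) (x : E) :
    √(moreauEnvelope φ r x) = ⨅ y, √(φ y + r / 2 * ‖y - x‖ ^ 2) :=
  Monotone.map_ciInf_of_continuousAt Real.continuous_sqrt.continuousAt
    (fun _ _ => Real.sqrt_le_sqrt) (bddBelow_range_moreau hφ hr x)

end MoreauEnvelope

namespace Seminorm

lemma continuous_of_finiteDimensional {E : Type*} [NormedAddCommGroup E] [NormedSpace ℝ E]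
    [FiniteDimensional ℝ E] (p : Seminorm ℝ E) : Continuous p :=
  continuousOn_univ.1 (p.convexOn.continuousOn isOpen_univ)

variable {E : Type*} [SeminormedAddCommGroup E] [NormedSpace ℝ E] (p : Seminorm ℝ E)

lemma moreauEnvelope_sq_smul (r : ℝ) {c : ℝ} (hc : c ≠ 0) (x : E) :
    moreauEnvelope (fun y => p y ^ 2) r (c • x) = c ^ 2 * moreauEnvelope (fun y => p y ^ 2) r x := by
  have hsurj : Function.Surjective (c • · : E → E) := fun y => ⟨c⁻¹ • y, smul_inv_smul₀ hc y⟩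
  rw [moreauEnvelope, ← hsurj.iInf_comp, moreauEnvelope, Real.mul_iInf_of_nonneg (sq_nonneg c)]
  congr 1 with y
  simp only [map_smul_eq_mul, ← smul_sub, norm_smul, Real.norm_eq_abs, mul_pow, sq_abs]
  ring

lemma sqrt_moreauEnvelope_sq_smul (r : ℝ) {c : ℝ} (hc : c ≠ 0) (x : E) :
    √(moreauEnvelope (fun y => p y ^ 2) r (c • x))
      = |c| * √(moreauEnvelope (fun y => p y ^ 2) r x) := by
  rw [p.moreauEnvelope_sq_smul r hc, Real.sqrt_mul (sq_nonneg c), Real.sqrt_sq_eq_abs]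

lemma sqrt_moreauEnvelope_sq_add_le {r : ℝ} (hr : 0 ≤ r) (x y : E) :
    √(moreauEnvelope (fun z => p z ^ 2) r (x + y))
      ≤ √(moreauEnvelope (fun z => p z ^ 2) r x) + √(moreauEnvelope (fun z => p z ^ 2) r y) := by
  have hφ : 0 ≤ fun z => p z ^ 2 := fun z => sq_nonneg (p z)
  simp only [sqrt_moreauEnvelope_eq_iInf hφ hr]
  refine le_ciInf_add_ciInf fun u v => ?_
  have hsum : p (u + v) ≤ p u + p v := map_add_le_add p u v
  have hdist : ‖u + v - (x + y)‖ ≤ ‖u - x‖ + ‖v - y‖ := by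
    rw [add_sub_add_comm]; exact norm_add_le _ _
  calc ⨅ w, √(p w ^ 2 + r / 2 * ‖w - (x + y)‖ ^ 2)
      ≤ √(p (u + v) ^ 2 + r / 2 * ‖u + v - (x + y)‖ ^ 2) :=
        ciInf_le ⟨0, forall_mem_range.2 fun _ => Real.sqrt_nonneg _⟩ (u + v)
    _ ≤ √((p u + p v) ^ 2 + r / 2 * (‖u - x‖ + ‖v - y‖) ^ 2) := by gcongr
    _ ≤ _ := sqrt_sq_add_mul_sq_add_le (by positivity) _ _ _ _

end Seminorm

/-- If `f` is a norm on ℝⁿ, then `h_r = √(e_r(f²))` is a norm: nonnegative, positively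
homogeneous, definite, symmetric, and satisfying the triangle inequality. -/
theorem sqrt_moreau_envelope_sq_norm_is_norm {n : ℕ}
    (f : EuclideanSpace ℝ (Fin n) → ℝ)
    (hdef : ∀ x, f x = 0 ↔ x = 0)
    (hhom : ∀ (c : ℝ) x, f (c • x) = |c| * f x)
    (htri : ∀ x y, f (x + y) ≤ f x + f y)
    (r : ℝ) (hr : 0 < r)
    (h : EuclideanSpace ℝ (Fin n) → ℝ)
    (hh : ∀ x, h x = Real.sqrt (⨅ y, (f y) ^ 2 + (r / 2) * ‖y - x‖ ^ 2)) :
    (∀ x, 0 ≤ h x) ∧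
    (∀ (α : ℝ), 0 < α → ∀ x, h (α • x) = α * h x) ∧
    (∀ x, h x = 0 → x = 0) ∧
    (∀ x, h (-x) = h x) ∧
    (∀ x y, h (x + y) ≤ h x + h y) := by
  let p : Seminorm ℝ (EuclideanSpace ℝ (Fin n)) := .of f htri hhom
  obtain rfl : h = fun x => √(moreauEnvelope (fun y => p y ^ 2) r x) := funext hh
  refine ⟨fun x => Real.sqrt_nonneg _, fun α hα x => ?_, fun x hx => ?_, fun x => ?_,
    p.sqrt_moreauEnvelope_sq_add_le hr.le⟩
  · simpa [abs_of_pos hα] using p.sqrt_moreauEnvelope_sq_smul r hα.ne' x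
  · by_contra hx0
    have hpx : 0 < p x ^ 2 := pow_pos ((apply_nonneg p x).lt_of_ne' (mt (hdef x).1 hx0)) 2
    have hcont : Continuous fun y => p y ^ 2 := p.continuous_of_finiteDimensional.pow 2
    exact (moreauEnvelope_pos (fun y => sq_nonneg (p y)) hr hpx
      hcont.continuousAt.lowerSemicontinuousAt).not_ge (Real.sqrt_eq_zero'.1 hx)
  · simpa using p.sqrt_moreauEnvelope_sq_smul r (c := -1) (neg_ne_zero.2 one_ne_zero) x
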